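/- arXiv:2307.05604 — 4 statements merged into one kernel-verified Lean document; each statement's English description precedes it below -/
import Mathlib

section
/- For any commutative R-algebra A, any topological space M, and the R-algebra C^0(M) of continuous real-valued functions on M, every R-linear derivation v : C^0(M) → C^0(M) is identically zero. -/
/-- Every ℝ-linear derivation of the ℝ-algebra `C(M, ℝ)` of continuous
real-valued functions on a topological space `M` is identically zero. -/
theorem derivation_of_continuous_functions_eq_zero
    {M : Type*} [TopologicalSpace M]
    (v : C(M, ℝ) →ₗ[ℝ] C(M, ℝ))
    (hv : ∀ f g : C(M, ℝ), v (f * g) = f * v g + g * v f) :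
    v = 0 := by
  have hv1 : v 1 = 0 := by
    have h := hv 1 1
    simp only [one_mul, mul_one] at h
    have h2 : (0 : C(M, ℝ)) + v 1 = v 1 + v 1 := by rw [zero_add, ← h]
    exact (add_right_cancel h2).symm
  ext f p
  set c : ℝ := f p with hc
  -- positive and negative parts of f - c, with square roots
  have hcont_h : Continuous fun x => Real.sqrt (max (f x - c) 0) := by
    fun_prop
  have hcont_k : Continuous fun x => Real.sqrt (max (c - f x) 0) := by
    fun_prop
  set h : C(M, ℝ) := ⟨fun x => Real.sqrt (max (f x - c) 0), hcont_h⟩ with hh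
  set k : C(M, ℝ) := ⟨fun x => Real.sqrt (max (c - f x) 0), hcont_k⟩ with hk
  have hfd : f = h * h - k * k + (c : ℝ) • (1 : C(M, ℝ)) := by
    ext x
    simp only [ContinuousMap.add_apply, ContinuousMap.sub_apply, ContinuousMap.mul_apply,
      ContinuousMap.smul_apply, ContinuousMap.one_apply, hh, hk, ContinuousMap.coe_mk]
    rw [Real.mul_self_sqrt (le_max_right _ _), Real.mul_self_sqrt (le_max_right _ _)]
    rcases le_total (f x) c with hle | hle
    · rw [max_eq_right (by linarith), max_eq_left (by linarith)]; simp only [smul_eq_mul]; ring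
    · rw [max_eq_left (by linarith), max_eq_right (by linarith)]; simp only [smul_eq_mul]; ring
  have hhp : h p = 0 := by
    simp [hh, hc]
  have hkp : k p = 0 := by
    simp [hk, hc]
  have : v f = h * v h + h * v h - (k * v k + k * v k) + c • v 1 := by
    rw [hfd]
    simp only [map_add, map_sub, map_smul, hv h h, hv k k]
  rw [hv1] at this
  have := congrArg (fun g : C(M, ℝ) => g p) this
  simp only [ContinuousMap.add_apply, ContinuousMap.sub_apply, ContinuousMap.mul_apply,
    ContinuousMap.smul_apply, ContinuousMap.zero_apply, hhp, hkp, smul_zero] at this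
  simpa using this
end

section
/- Let v be an R-linear derivation of C^0(M). If f ∈ C^0(M) is nonnegative and f(x) = 0 at some point x ∈ M, then v(f)(x) = 0. -/
/-- If `v` is an ℝ-linear derivation of `C⁰(M)`, `f` is nonnegative and
`f x = 0`, then `v f x = 0`. -/
theorem derivation_vanishes_at_zero_of_nonneg
    {M : Type*} [TopologicalSpace M]
    (v : C(M, ℝ) →ₗ[ℝ] C(M, ℝ))
    (hv : ∀ f g : C(M, ℝ), v (f * g) = f * v g + g * v f)
    (f : C(M, ℝ)) (hf : ∀ y : M, 0 ≤ f y) (x : M) (hx : f x = 0) :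
    v f x = 0 := by
  set g : C(M, ℝ) := ⟨fun y => Real.sqrt (f y), by fun_prop⟩ with hg
  have hgg : g * g = f := by
    ext y
    simp [hg, Real.mul_self_sqrt (hf y)]
  have hgx : g x = 0 := by simp [hg, hx]
  have := hv g g
  rw [hgg] at this
  have h2 := congrArg (fun h => h x) this
  simpa [hgx] using h2
end

section
/- The commutator [X,Y] := X∘Y - Y∘X of two C∞-derivations of a C∞-ring 𝒞 is again a C∞-derivation of 𝒞; consequently the space of C∞-derivations of 𝒞 is a real Lie algebra under the commutator bracket. -/
/-- A `C∞`-ring structure on a commutative ℝ-algebra `C`: for every smooth function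
`f : ℝⁿ → ℝ` an `n`-ary operation, compatible with composition, projections, and the
ring operations. -/
structure CInfRing (C : Type*) [CommRing C] [Algebra ℝ C] where
  op : ∀ {n : ℕ} (f : (Fin n → ℝ) → ℝ), ContDiff ℝ (⊤ : ℕ∞) f → (Fin n → C) → C
  op_comp : ∀ {n m : ℕ} (g : (Fin m → ℝ) → ℝ) (hg : ContDiff ℝ (⊤ : ℕ∞) g)
      (f : Fin m → (Fin n → ℝ) → ℝ) (hf : ∀ i, ContDiff ℝ (⊤ : ℕ∞) (f i))
      (hc : ContDiff ℝ (⊤ : ℕ∞) fun x => g fun i => f i x) (a : Fin n → C),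
      op (fun x => g fun i => f i x) hc a = op g hg fun i => op (f i) (hf i) a
  op_proj : ∀ {n : ℕ} (i : Fin n) (h : ContDiff ℝ (⊤ : ℕ∞) fun x : Fin n → ℝ => x i)
      (a : Fin n → C), op (fun x => x i) h a = a i
  op_add : ∀ (h : ContDiff ℝ (⊤ : ℕ∞) fun x : Fin 2 → ℝ => x 0 + x 1) (a : Fin 2 → C),
      op (fun x => x 0 + x 1) h a = a 0 + a 1
  op_mul : ∀ (h : ContDiff ℝ (⊤ : ℕ∞) fun x : Fin 2 → ℝ => x 0 * x 1) (a : Fin 2 → C),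
      op (fun x => x 0 * x 1) h a = a 0 * a 1
  op_const : ∀ (r : ℝ) (h : ContDiff ℝ (⊤ : ℕ∞) fun _ : Fin 0 → ℝ => r) (a : Fin 0 → C),
      op (fun _ => r) h a = algebraMap ℝ C r

/-- A `C∞`-derivation of the `C∞`-ring `(C, S)` with values in a `C`-module `M`:
`X (f_C (a₁,…,aₙ)) = Σᵢ (∂ᵢ f)_C (a₁,…,aₙ) • X aᵢ`. -/
def IsCInfDerivation {C : Type*} [CommRing C] [Algebra ℝ C] (S : CInfRing C)
    {M : Type*} [AddCommGroup M] [Module C M] (X : C → M) : Prop :=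
  ∀ (n : ℕ) (f : (Fin n → ℝ) → ℝ) (hf : ContDiff ℝ (⊤ : ℕ∞) f)
    (hf' : ∀ i : Fin n, ContDiff ℝ (⊤ : ℕ∞) fun x => fderiv ℝ f x (Pi.single i 1))
    (a : Fin n → C),
    X (S.op f hf a) =
      ∑ i, S.op (fun x => fderiv ℝ f x (Pi.single i 1)) (hf' i) a • X (a i)

section Helpers

variable {C : Type*} [CommRing C] [Algebra ℝ C] (S : CInfRing C)

lemma pd_smooth {n : ℕ} {f : (Fin n → ℝ) → ℝ} (hf : ContDiff ℝ (⊤ : ℕ∞) f) (v : Fin n → ℝ) :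
    ContDiff ℝ (⊤ : ℕ∞) (fun x => fderiv ℝ f x v) :=
  (hf.fderiv_right (by simp)).clm_apply contDiff_const

lemma fderiv_proj' {n : ℕ} (j : Fin n) (x : Fin n → ℝ) :
    fderiv ℝ (fun x : Fin n → ℝ => x j) x = ContinuousLinearMap.proj j :=
  (ContinuousLinearMap.proj j : (Fin n → ℝ) →L[ℝ] ℝ).fderiv

lemma op_congr {n : ℕ} {f₁ f₂ : (Fin n → ℝ) → ℝ} (h : f₁ = f₂)
    (h₁ : ContDiff ℝ (⊤ : ℕ∞) f₁) (h₂ : ContDiff ℝ (⊤ : ℕ∞) f₂) (a : Fin n → C) :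
    S.op f₁ h₁ a = S.op f₂ h₂ a := by subst h; rfl

lemma op_constant {n : ℕ} (r : ℝ) (h : ContDiff ℝ (⊤ : ℕ∞) fun _ : Fin n → ℝ => r)
    (a : Fin n → C) : S.op (fun _ => r) h a = algebraMap ℝ C r := by
  have := S.op_comp (fun _ : Fin 0 → ℝ => r) contDiff_const
    (fun i => i.elim0) (fun i => i.elim0) h a
  rw [this, S.op_const]

variable {X : C → C} (hX : IsCInfDerivation S X)

include hX in
lemma derOp {n : ℕ} (f : (Fin n → ℝ) → ℝ) (hf : ContDiff ℝ (⊤ : ℕ∞) f) (a : Fin n → C) :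
    X (S.op f hf a) =
      ∑ i, S.op (fun x => fderiv ℝ f x (Pi.single i 1)) (pd_smooth hf _) a * X (a i) := by
  simpa [smul_eq_mul] using hX n f hf (fun i => pd_smooth hf _) a

include hX in
lemma derAdd (a b : C) : X (a + b) = X a + X b := by
  have hadd : ContDiff ℝ (⊤ : ℕ∞) fun x : Fin 2 → ℝ => x 0 + x 1 :=
    (contDiff_apply ℝ ℝ 0).add (contDiff_apply ℝ ℝ 1)
  have h := derOp S hX _ hadd ![a, b]
  rw [S.op_add] at h
  have hpd : ∀ i : Fin 2, (fun x : Fin 2 → ℝ => fderiv ℝ (fun x : Fin 2 → ℝ => x 0 + x 1) x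
      (Pi.single i 1)) = fun _ => ((Pi.single i 1 : Fin 2 → ℝ) 0 + (Pi.single i 1 : Fin 2 → ℝ) 1) := by
    intro i; funext x
    have d0 : DifferentiableAt ℝ (fun x : Fin 2 → ℝ => x 0) x :=
      (ContinuousLinearMap.proj 0 : (Fin 2 → ℝ) →L[ℝ] ℝ).differentiableAt
    have d1 : DifferentiableAt ℝ (fun x : Fin 2 → ℝ => x 1) x :=
      (ContinuousLinearMap.proj 1 : (Fin 2 → ℝ) →L[ℝ] ℝ).differentiableAt
    rw [fderiv_fun_add d0 d1]
    simp [fderiv_proj']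
  rw [Fin.sum_univ_two, op_congr S (hpd 0) _ (contDiff_const), op_congr S (hpd 1) _ (contDiff_const),
    op_constant, op_constant] at h
  simpa using h

include hX in
lemma derZero : X 0 = 0 := by
  have h := derAdd S hX 0 0
  simp only [add_zero] at h
  exact add_left_cancel (h.symm.trans (add_zero (X 0)).symm)

include hX in
lemma derMul (a b : C) : X (a * b) = b * X a + a * X b := by
  have hmul : ContDiff ℝ (⊤ : ℕ∞) fun x : Fin 2 → ℝ => x 0 * x 1 :=
    (contDiff_apply ℝ ℝ 0).mul (contDiff_apply ℝ ℝ 1)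
  have h := derOp S hX _ hmul ![a, b]
  rw [S.op_mul] at h
  have hpd : ∀ i : Fin 2, (fun x : Fin 2 → ℝ => fderiv ℝ (fun x : Fin 2 → ℝ => x 0 * x 1) x
      (Pi.single i 1)) = fun x : Fin 2 → ℝ =>
        x 0 * (Pi.single i 1 : Fin 2 → ℝ) 1 + x 1 * (Pi.single i 1 : Fin 2 → ℝ) 0 := by
    intro i; funext x
    have d0 : DifferentiableAt ℝ (fun x : Fin 2 → ℝ => x 0) x :=
      (ContinuousLinearMap.proj 0 : (Fin 2 → ℝ) →L[ℝ] ℝ).differentiableAt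
    have d1 : DifferentiableAt ℝ (fun x : Fin 2 → ℝ => x 1) x :=
      (ContinuousLinearMap.proj 1 : (Fin 2 → ℝ) →L[ℝ] ℝ).differentiableAt
    rw [fderiv_fun_mul d0 d1]
    simp [fderiv_proj']
  have e0 : (fun x : Fin 2 → ℝ => x 0 * (Pi.single 0 1 : Fin 2 → ℝ) 1 +
      x 1 * (Pi.single 0 1 : Fin 2 → ℝ) 0) = fun x => x 1 := by
    funext x; simp
  have e1 : (fun x : Fin 2 → ℝ => x 0 * (Pi.single 1 1 : Fin 2 → ℝ) 1 +
      x 1 * (Pi.single 1 1 : Fin 2 → ℝ) 0) = fun x => x 0 := by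
    funext x; simp
  rw [Fin.sum_univ_two,
    op_congr S ((hpd 0).trans e0) _ ((contDiff_apply ℝ ℝ 1)),
    op_congr S ((hpd 1).trans e1) _ ((contDiff_apply ℝ ℝ 0)),
    S.op_proj, S.op_proj] at h
  simpa using h

include hX in
lemma derSum {ι : Type*} (s : Finset ι) (c : ι → C) :
    X (∑ i ∈ s, c i) = ∑ i ∈ s, X (c i) := by
  classical
  induction s using Finset.induction_on with
  | empty => simpa using derZero S hX
  | insert _ _ h ih => simp [Finset.sum_insert h, derAdd S hX, ih]

end Helpers

/-- the commutator of two `C∞`-derivations of a `C∞`-ring is again a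
`C∞`-derivation (hence the `C∞`-derivations form a real Lie algebra under the
commutator bracket). -/
theorem commutator_isCInfDerivation {C : Type*} [CommRing C] [Algebra ℝ C]
    (S : CInfRing C) (X Y : C → C)
    (hX : IsCInfDerivation S X) (hY : IsCInfDerivation S Y) :
    IsCInfDerivation S (fun c => X (Y c) - Y (X c)) := by
  intro n f hf hf' a
  classical
  set pd : Fin n → (Fin n → ℝ) → ℝ := fun i x => fderiv ℝ f x (Pi.single i 1) with hpddef
  set g : Fin n → C := fun i => S.op (pd i) (hf' i) a with hgdef
  set h2 : Fin n → Fin n → C := fun i j =>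
    S.op (fun x => fderiv ℝ (pd i) x (Pi.single j 1)) (pd_smooth (hf' i) _) a with hh2def
  have hsymm : ∀ i j, h2 i j = h2 j i := by
    intro i j
    apply op_congr
    funext x
    have hd : DifferentiableAt ℝ (fderiv ℝ f) x :=
      ((hf.fderiv_right (m := (⊤ : ℕ∞)) (by simp)).differentiable (by simp)).differentiableAt
    show fderiv ℝ (fun y => fderiv ℝ f y (Pi.single i 1)) x (Pi.single j 1)
        = fderiv ℝ (fun y => fderiv ℝ f y (Pi.single j 1)) x (Pi.single i 1)
    rw [fderiv_clm_apply hd (differentiableAt_const (Pi.single i 1)),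
        fderiv_clm_apply hd (differentiableAt_const (Pi.single j 1))]
    simp
    exact (hf.contDiffAt.isSymmSndFDerivAt (by rw [minSmoothness_of_isRCLikeNormedField]; exact WithTop.coe_le_coe.mpr le_top)) (Pi.single j 1) (Pi.single i 1)
  have key : ∀ (Z W : C → C), IsCInfDerivation S Z → IsCInfDerivation S W →
      Z (W (S.op f hf a)) =
        (∑ i, ∑ j, W (a i) * (h2 i j * Z (a j))) + ∑ i, g i * Z (W (a i)) := by
    intro Z W hZ hW
    have e1 : W (S.op f hf a) = ∑ i, g i * W (a i) := derOp S hW f hf a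
    have e2 : ∀ i, Z (g i) = ∑ j, h2 i j * Z (a j) := fun i => derOp S hZ (pd i) (hf' i) a
    calc Z (W (S.op f hf a)) = Z (∑ i, g i * W (a i)) := by rw [e1]
      _ = ∑ i, Z (g i * W (a i)) := derSum S hZ _ _
      _ = ∑ i, (W (a i) * Z (g i) + g i * Z (W (a i))) := by
            refine Finset.sum_congr rfl fun i _ => ?_
            rw [derMul S hZ]
      _ = ∑ i, W (a i) * Z (g i) + ∑ i, g i * Z (W (a i)) := Finset.sum_add_distrib
      _ = _ := by
            congr 1
            refine Finset.sum_congr rfl fun i _ => ?_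
            rw [e2 i, Finset.mul_sum]
  have cancel : (∑ i, ∑ j, Y (a i) * (h2 i j * X (a j)))
      = ∑ i, ∑ j, X (a i) * (h2 i j * Y (a j)) := by
    rw [Finset.sum_comm]
    refine Finset.sum_congr rfl fun i _ => Finset.sum_congr rfl fun j _ => ?_
    rw [hsymm j i]; ring
  show X (Y (S.op f hf a)) - Y (X (S.op f hf a)) = ∑ i, g i • (X (Y (a i)) - Y (X (a i)))
  rw [key X Y hX hY, key Y X hY hX, cancel]
  simp only [smul_eq_mul, mul_sub, Finset.sum_sub_distrib]
  abel
end

section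
/- Let M ⊆ ℝᵐ be a closed subset and 𝓕 = C∞(ℝᵐ)|_M the restrictions of smooth functions, with C∞-ring structure h_𝓕(f₁|_M,…,fₖ|_M) = h∘(f₁|_M,…,fₖ|_M). Set I = {f ∈ C∞(ℝᵐ) : f|_M = 0}, 𝓓 = {V ∈ χ(ℝᵐ) : V(I) ⊆ I}, and 𝓙 = {V ∈ 𝓓 : V(xᵢ)|_M = 0 for all coordinate functions xᵢ}. Then the map π : 𝓓 → C∞Der(𝓕) given by π(V)(f|_M) = V(f)|_M is well-defined, surjective, has kernel 𝓙, and induces an isomorphism of 𝓕-modules 𝓓/𝓙 ≅ C∞Der(𝓕). -/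
/-- A family `F` of real-valued functions is closed under composition with smooth
functions `ℝᵏ → ℝ` (in particular `F` is a `C∞`-ring of functions). -/
def SmoothClosed {X : Type} (F : Set (X → ℝ)) : Prop :=
  ∀ (k : ℕ) (h : (Fin k → ℝ) → ℝ), ContDiff ℝ (⊤ : ℕ∞) h →
    ∀ a : Fin k → (X → ℝ), (∀ i, a i ∈ F) → (fun m => h fun i => a i m) ∈ F

/-- A `C∞`-derivation of the `C∞`-ring of functions `F`: `w` maps `F` to `F` and
satisfies the chain rule `w (h∘(a₁,…,aₖ)) = Σᵢ (∂ᵢh)∘(a₁,…,aₖ) · w(aᵢ)` for all smooth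
`h : ℝᵏ → ℝ` and all `a₁,…,aₖ ∈ F`. -/
def IsCInfDerF {X : Type} (F : Set (X → ℝ)) (w : (X → ℝ) → (X → ℝ)) : Prop :=
  (∀ f ∈ F, w f ∈ F) ∧
  ∀ (k : ℕ) (h : (Fin k → ℝ) → ℝ), ContDiff ℝ (⊤ : ℕ∞) h →
    ∀ a : Fin k → (X → ℝ), (∀ i, a i ∈ F) →
      w (fun m => h fun i => a i m)
        = fun m => ∑ i, fderiv ℝ h (fun j => a j m) (Pi.single i 1) * w (a i) m

/-- The `C∞`-ring `C∞(ℝᵐ)|_M` of restrictions of smooth functions to a subset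
`M ⊆ ℝᵐ`. -/
def RestrF (m : ℕ) (M : Set (Fin m → ℝ)) : Set (M → ℝ) :=
  {g | ∃ f : (Fin m → ℝ) → ℝ, ContDiff ℝ (⊤ : ℕ∞) f ∧ ∀ x : M, g x = f x}

/-- The action of the vector field `V = Σᵢ aᵢ ∂/∂xᵢ` on functions on `ℝᵐ`. -/
noncomputable def Vact {m : ℕ} (a : Fin m → ((Fin m → ℝ) → ℝ))
    (f : (Fin m → ℝ) → ℝ) : (Fin m → ℝ) → ℝ :=
  fun x => ∑ i, a i x * fderiv ℝ f x (Pi.single i 1)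

/-- The smooth vector fields on `ℝᵐ` preserving the vanishing ideal
`I = {f : f|_M = 0}` (the set `𝒟` of the paper). -/
def InD (m : ℕ) (M : Set (Fin m → ℝ)) (a : Fin m → ((Fin m → ℝ) → ℝ)) : Prop :=
  (∀ i, ContDiff ℝ (⊤ : ℕ∞) (a i)) ∧
  ∀ f : (Fin m → ℝ) → ℝ, ContDiff ℝ (⊤ : ℕ∞) f → (∀ x ∈ M, f x = 0) →
    ∀ x ∈ M, Vact a f x = 0

/-- Expansion of a continuous linear functional on `ℝᵏ` in the standard basis. -/
lemma clm_expand {k : ℕ} (L : (Fin k → ℝ) →L[ℝ] ℝ) (w : Fin k → ℝ) :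
    L w = ∑ i, w i * L (Pi.single i 1) := by
  conv_lhs => rw [← Finset.univ_sum_single w]
  rw [map_sum]
  refine Finset.sum_congr rfl fun i _ => ?_
  have : (Pi.single i (w i) : Fin k → ℝ) = w i • (Pi.single i 1 : Fin k → ℝ) := by
    funext j
    by_cases hji : j = i
    · subst hji; simp
    · simp [Pi.single_apply, hji]
  rw [this, map_smul, smul_eq_mul]

/-- Chain rule for the action of a vector field. -/
lemma vact_chain {m k : ℕ} (a : Fin m → ((Fin m → ℝ) → ℝ))
    (h : (Fin k → ℝ) → ℝ) (hh : ContDiff ℝ (⊤ : ℕ∞) h)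
    (f : Fin k → ((Fin m → ℝ) → ℝ)) (hf : ∀ i, ContDiff ℝ (⊤ : ℕ∞) (f i)) (x : Fin m → ℝ) :
    Vact a (fun y => h (fun i => f i y)) x
      = ∑ i, fderiv ℝ h (fun j => f j x) (Pi.single i 1) * Vact a (f i) x := by
  have hd : ∀ i, DifferentiableAt ℝ (f i) x := fun i => ((hf i).differentiable (by simp)) x
  have hdF : DifferentiableAt ℝ (fun y (i : Fin k) => f i y) x :=
    ((contDiff_pi.mpr hf).differentiable (by simp)) x
  have hdh : DifferentiableAt ℝ h (fun i => f i x) := (hh.differentiable (by simp)) _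
  have key : ∀ v, fderiv ℝ (fun y => h (fun i => f i y)) x v
      = ∑ i, fderiv ℝ h (fun j => f j x) (Pi.single i 1) * fderiv ℝ (f i) x v := by
    intro v
    have : (fun y => h (fun i => f i y)) = h ∘ (fun y i => f i y) := rfl
    rw [this, fderiv_comp x hdh hdF, ContinuousLinearMap.comp_apply,
      clm_expand (fderiv ℝ h (fun i => f i x)), fderiv_pi hd]
    refine Finset.sum_congr rfl fun i _ => ?_
    rw [mul_comm]
    rfl
  unfold Vact
  simp_rw [key, Finset.mul_sum]
  rw [Finset.sum_comm]
  exact Finset.sum_congr rfl fun i _ => Finset.sum_congr rfl fun j _ => by ring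

/-- The action of a smooth vector field on a smooth function is smooth. -/
lemma vact_smooth {m : ℕ} {a : Fin m → ((Fin m → ℝ) → ℝ)} (ha : ∀ i, ContDiff ℝ (⊤ : ℕ∞) (a i))
    {f : (Fin m → ℝ) → ℝ} (hf : ContDiff ℝ (⊤ : ℕ∞) f) : ContDiff ℝ (⊤ : ℕ∞) (Vact a f) := by
  unfold Vact
  refine ContDiff.sum fun i _ => (ha i).mul ?_
  exact (hf.fderiv_right (by simp)).clm_apply contDiff_const

/-- The action of `V = Σᵢ aᵢ ∂/∂xᵢ` on the coordinate function `xᵢ` is `aᵢ`. -/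
lemma vact_coord {m : ℕ} (a : Fin m → ((Fin m → ℝ) → ℝ)) (i : Fin m) (x : Fin m → ℝ) :
    Vact a (fun y => y i) x = a i x := by
  unfold Vact
  have : fderiv ℝ (fun y : Fin m → ℝ => y i) x = ContinuousLinearMap.proj i :=
    (ContinuousLinearMap.proj i : (Fin m → ℝ) →L[ℝ] ℝ).fderiv
  rw [this]
  rw [Finset.sum_eq_single i]
  · simp
  · intro j _ hj; simp [ContinuousLinearMap.proj_apply, Pi.single_apply, hj.symm]
  · simp

/-- Vector fields act linearly: action on a difference. -/
lemma vact_sub {m : ℕ} (a : Fin m → ((Fin m → ℝ) → ℝ)) {f g : (Fin m → ℝ) → ℝ}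
    (hf : ContDiff ℝ (⊤ : ℕ∞) f) (hg : ContDiff ℝ (⊤ : ℕ∞) g) (x : Fin m → ℝ) :
    Vact a (fun y => f y - g y) x = Vact a f x - Vact a g x := by
  unfold Vact
  rw [fderiv_fun_sub ((hf.differentiable (by simp)) x) ((hg.differentiable (by simp)) x),
    ← Finset.sum_sub_distrib]
  exact Finset.sum_congr rfl fun i _ => by simp [mul_sub]

/-- A chosen global smooth representative of an element of `C∞(ℝᵐ)|_M`. -/
noncomputable def myrep {m : ℕ} {M : Set (Fin m → ℝ)} {g : M → ℝ}
    (hg : ∃ f : (Fin m → ℝ) → ℝ, ContDiff ℝ (⊤ : ℕ∞) f ∧ ∀ x : M, g x = f x) :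
    (Fin m → ℝ) → ℝ := Exists.choose hg

lemma myrep_spec {m : ℕ} {M : Set (Fin m → ℝ)} {g : M → ℝ}
    (hg : ∃ f : (Fin m → ℝ) → ℝ, ContDiff ℝ (⊤ : ℕ∞) f ∧ ∀ x : M, g x = f x) :
    ContDiff ℝ (⊤ : ℕ∞) (myrep hg) ∧ ∀ x : M, g x = myrep hg x := Exists.choose_spec hg

/-- for a closed subset `M ⊆ ℝᵐ` with `𝓕 = C∞(ℝᵐ)|_M`,
`𝓓 = {V ∈ χ(ℝᵐ) : V(I) ⊆ I}` and `𝓙 = {V ∈ 𝓓 : V(xᵢ)|_M = 0 ∀i}`, the map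
`π : 𝓓 → C∞Der(𝓕)`, `π(V)(f|_M) = V(f)|_M`, is well defined (independent of the
representative `f`, with values in `C∞`-derivations of `𝓕`), surjective, and has
kernel `𝓙`; hence it induces an isomorphism of `𝓕`-modules `𝓓/𝓙 ≅ C∞Der(𝓕)`. -/
theorem restriction_derivations_iso (m : ℕ) (M : Set (Fin m → ℝ)) (hM : IsClosed M) :
    -- π is well defined: `V(f)|_M` only depends on `f|_M`
    (∀ a, InD m M a → ∀ f₁ f₂ : (Fin m → ℝ) → ℝ, ContDiff ℝ (⊤ : ℕ∞) f₁ → ContDiff ℝ (⊤ : ℕ∞) f₂ →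
      (∀ x ∈ M, f₁ x = f₂ x) → ∀ x ∈ M, Vact a f₁ x = Vact a f₂ x) ∧
    -- π(V) is a C∞-derivation of 𝓕
    (∀ a, InD m M a → ∃ v : (M → ℝ) → (M → ℝ), IsCInfDerF (RestrF m M) v ∧
      ∀ f : (Fin m → ℝ) → ℝ, ContDiff ℝ (⊤ : ℕ∞) f →
        ∀ x : M, v (fun y : M => f y) x = Vact a f x) ∧
    -- π is surjective
    (∀ v : (M → ℝ) → (M → ℝ), IsCInfDerF (RestrF m M) v →
      ∃ a, InD m M a ∧ ∀ f : (Fin m → ℝ) → ℝ, ContDiff ℝ (⊤ : ℕ∞) f →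
        ∀ x : M, v (fun y : M => f y) x = Vact a f x) ∧
    -- kernel of π is 𝓙
    (∀ a, InD m M a →
      ((∀ f : (Fin m → ℝ) → ℝ, ContDiff ℝ (⊤ : ℕ∞) f → ∀ x ∈ M, Vact a f x = 0) ↔
        (∀ i : Fin m, ∀ x ∈ M, Vact a (fun y => y i) x = 0))) := by
  classical
  -- well-definedness
  have wd : ∀ a, InD m M a → ∀ f₁ f₂ : (Fin m → ℝ) → ℝ, ContDiff ℝ (⊤ : ℕ∞) f₁ → ContDiff ℝ (⊤ : ℕ∞) f₂ →
      (∀ x ∈ M, f₁ x = f₂ x) → ∀ x ∈ M, Vact a f₁ x = Vact a f₂ x := by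
    intro a ha f₁ f₂ h1 h2 heq x hx
    have h0 : ∀ y ∈ M, (fun y => f₁ y - f₂ y) y = 0 := fun y hy => by simp [heq y hy]
    have := ha.2 _ (h1.sub h2) h0 x hx
    rw [vact_sub a h1 h2 x] at this
    linarith
  refine ⟨wd, ?_, ?_, ?_⟩
  · -- π(V) is a C∞-derivation
    intro a ha
    set v : (M → ℝ) → (M → ℝ) :=
      fun g => if hg : g ∈ RestrF m M then fun x => Vact a (myrep hg) ↑x else 0 with hv_def
    have hv : ∀ (g) (hg : g ∈ RestrF m M), v g = fun x : M => Vact a (myrep hg) ↑x := by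
      intro g hg
      rw [hv_def]
      exact dif_pos hg
    refine ⟨v, ⟨?_, ?_⟩, ?_⟩
    · -- maps 𝓕 to 𝓕
      intro g hg
      rw [hv g hg]
      exact ⟨Vact a (myrep hg), vact_smooth ha.1 (myrep_spec hg).1, fun _ => rfl⟩
    · -- chain rule
      intro k h hh b hb
      have hfi : ∀ i, ContDiff ℝ (⊤ : ℕ∞) (myrep (hb i)) := fun i => (myrep_spec (hb i)).1
      have hcomp : ContDiff ℝ (⊤ : ℕ∞) (fun y => h (fun i => myrep (hb i) y)) :=
        hh.comp (contDiff_pi.mpr hfi)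
      have hmem : (fun m' : M => h fun i => b i m') ∈ RestrF m M := by
        refine ⟨fun y => h (fun i => myrep (hb i) y), hcomp, fun x => ?_⟩
        show h (fun i => b i x) = h (fun i => myrep (hb i) ↑x)
        congr 1
        funext i
        exact (myrep_spec (hb i)).2 x
      have hvb : ∀ i, v (b i) = fun x : M => Vact a (myrep (hb i)) ↑x :=
        fun i => hv _ (hb i)
      rw [hv _ hmem]
      funext x
      have hx : Vact a (myrep hmem) ↑x
          = Vact a (fun y => h (fun i => myrep (hb i) y)) ↑x := by
        refine wd a ha _ _ (myrep_spec hmem).1 hcomp (fun y hy => ?_) ↑x x.2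
        have e1 : myrep hmem y = h fun i => b i ⟨y, hy⟩ :=
          ((myrep_spec hmem).2 ⟨y, hy⟩).symm
        have e2 : (h fun i => b i ⟨y, hy⟩) = h fun i => myrep (hb i) y := by
          congr 1
          funext i
          exact (myrep_spec (hb i)).2 ⟨y, hy⟩
        rw [e1]
        exact e2
      rw [hx, vact_chain a h hh _ hfi]
      simp only [hvb]
      refine Finset.sum_congr rfl fun i _ => ?_
      have harg : (fun j => myrep (hb j) ↑x) = (fun j => b j x) := by
        funext j
        exact ((myrep_spec (hb j)).2 x).symm
      rw [harg]
    · -- agrees with V on restrictions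
      intro f hf x
      have hmem : (fun y : M => f ↑y) ∈ RestrF m M := ⟨f, hf, fun _ => rfl⟩
      rw [hv _ hmem]
      exact wd a ha _ f (myrep_spec hmem).1 hf
        (fun y hy => ((myrep_spec hmem).2 ⟨y, hy⟩).symm) ↑x x.2
  · -- surjectivity
    intro v hv
    have hcoord : ∀ i : Fin m, (fun y : M => (y : Fin m → ℝ) i) ∈ RestrF m M :=
      fun i => ⟨fun y => y i, contDiff_apply ℝ ℝ i, fun _ => rfl⟩
    have hva : ∀ i, (∃ f : (Fin m → ℝ) → ℝ, ContDiff ℝ (⊤ : ℕ∞) f ∧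
        ∀ x : M, v (fun y : M => (y : Fin m → ℝ) i) x = f x) :=
      fun i => hv.1 _ (hcoord i)
    set a : Fin m → ((Fin m → ℝ) → ℝ) := fun i => myrep (hva i) with ha_def
    have ha1 : ∀ i, ContDiff ℝ (⊤ : ℕ∞) (a i) := fun i => (myrep_spec (hva i)).1
    have ha2 : ∀ i (x : M), v (fun y : M => (y : Fin m → ℝ) i) x = a i ↑x :=
      fun i x => (myrep_spec (hva i)).2 x
    have key : ∀ f : (Fin m → ℝ) → ℝ, ContDiff ℝ (⊤ : ℕ∞) f →
        ∀ x : M, v (fun y : M => f ↑y) x = Vact a f ↑x := by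
      intro f hf x
      have happ := congrFun (hv.2 m f hf (fun i (y : M) => (y : Fin m → ℝ) i) hcoord) x
      have h1 : v (fun y : M => f ↑y) x = ∑ i, fderiv ℝ f ↑x (Pi.single i 1) *
          v (fun y : M => (y : Fin m → ℝ) i) x := happ
      rw [h1]
      unfold Vact
      refine Finset.sum_congr rfl fun i _ => ?_
      rw [ha2 i x]
      ring
    refine ⟨a, ⟨ha1, ?_⟩, key⟩
    intro f hf hf0 x hx
    have h1 : (fun y : M => f ↑y) = (fun _ : M => (0 : ℝ)) :=
      funext fun y => hf0 ↑y y.2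
    have h2 : v (fun _ : M => (0 : ℝ)) = fun _ => 0 := by
      have := hv.2 0 (fun _ => 0) contDiff_const Fin.elim0 (fun i => i.elim0)
      simpa using this
    have h3 := key f hf ⟨x, hx⟩
    rw [h1, h2] at h3
    exact h3.symm
  · -- kernel
    intro a ha
    constructor
    · intro H i x hx
      exact H _ (contDiff_apply ℝ ℝ i) x hx
    · intro H f hf x hx
      unfold Vact
      refine Finset.sum_eq_zero fun i _ => ?_
      have h0 := H i x hx
      rw [vact_coord] at h0
      rw [h0, zero_mul]
end
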